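/- arXiv:0912.0668 — 3 statements merged into one kernel-verified Lean document; each statement's English description precedes it below -/
import Mathlib

section
/- Let f, g ∈ PL₀(I) and let (a,b) be an orbital of f. Then the right derivative of the conjugate g⁻¹fg at g(a) equals the right derivative of f at a, and the left derivative of g⁻¹fg at g(b) equals the left derivative of f at b. -/
/-!
At a fixed point `a` of `f`, both `f` and `g` are affine on a one-sided neighbourhood of `a`:
a breakpoint-free open interval is connected, so the local affine pieces there agree, and
continuity carries the formula to the endpoint `a`. If `f y = a + τ (y - a)` and
`g y = g a + σ (y - a)` near `a` on one side, then `g f g⁻¹ x = g a + τ (x - g a)` near `g a` on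
the same side, because `g` preserves sides. Hence both one-sided derivatives are `τ`.
-/

/-- The support of a permutation `f` of `ℝ` : the set of points moved by `f`. -/
def Supp (f : Equiv.Perm ℝ) : Set ℝ := {x : ℝ | f x ≠ x}

/-- `IsPL0 f` says that `f` is (the extension by the identity on `ℝ \ [0,1]` of) a
piecewise-linear orientation-preserving homeomorphism of the unit interval `[0,1]`
with only finitely many breakpoints; this represents membership in `PL₀(I)`.
The finite set `B` collects the possible points of non-differentiability: away from
`B` the map is locally affine. -/
def IsPL0 (f : Equiv.Perm ℝ) : Prop :=
  StrictMono ⇑f ∧ (∀ x : ℝ, x ≤ 0 → f x = x) ∧ (∀ x : ℝ, 1 ≤ x → f x = x) ∧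
    ∃ B : Finset ℝ, ∀ x : ℝ, x ∉ B → ∃ s t : ℝ, ∀ᶠ y in nhds x, f y = s * y + t

/-- `IsOrbital f a b` : the open interval `(a,b)` is an orbital of `f`, i.e. a
connected component of `Supp f` (an open interval contained in the support whose
endpoints are fixed by `f`). -/
def IsOrbital (f : Equiv.Perm ℝ) (a b : ℝ) : Prop :=
  a < b ∧ Set.Ioo a b ⊆ Supp f ∧ f a = a ∧ f b = b

open Set Filter Topology

lemma exists_eqOn_affine_of_isPreconnected {f : ℝ → ℝ} {I : Set ℝ} (hI : IsPreconnected I)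
    (h : ∀ y ∈ I, ∃ s t : ℝ, ∀ᶠ z in 𝓝 y, f z = s * z + t) :
    ∃ s t : ℝ, EqOn f (fun z ↦ s * z + t) I := by
  rcases I.eq_empty_or_nonempty with rfl | ⟨y₀, hy₀⟩
  · exact ⟨0, 0, eqOn_empty _ _⟩
  -- slope and intercept, read off from the derivative, are locally constant on `I`
  let φ : ℝ → ℝ × ℝ := fun z ↦ (deriv f z, f z - deriv f z * z)
  have hφ : ∀ y ∈ I, ∃ s t : ℝ, ∀ᶠ z in 𝓝 y, φ z = (s, t) := by
    intro y hy
    obtain ⟨s, t, hst⟩ := h y hy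
    refine ⟨s, t, hst.eventually_nhds.mono fun z hz ↦ ?_⟩
    have hderiv : deriv f z = s := by
      rw [Filter.EventuallyEq.deriv_eq hz]
      simp
    simp only [φ, hderiv, hz.self_of_nhds]
    ring_nf
  obtain ⟨s, t, hst⟩ := hφ y₀ hy₀
  refine ⟨s, t, fun y hy ↦ ?_⟩
  have hconst : φ y = (s, t) := by
    rw [← hst.self_of_nhds]
    exact eq_of_germ_isConstant_on (fun z hz ↦ (hφ z hz).elim fun s ⟨t, h⟩ ↦ ⟨(s, t), h⟩) hI hy hy₀
  simp only [φ, Prod.mk.injEq] at hconst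
  show f y = s * y + t
  linarith [hconst.2, congrArg (· * y) hconst.1]

lemma exists_eqOn_affine_through_of_isPreconnected {f : ℝ → ℝ} (hf : Continuous f) {I : Set ℝ}
    (hI : IsPreconnected I) {a : ℝ} (ha : a ∈ closure I)
    (h : ∀ y ∈ I, ∃ s t : ℝ, ∀ᶠ z in 𝓝 y, f z = s * z + t) :
    ∃ τ : ℝ, EqOn f (fun y ↦ f a + τ * (y - a)) I := by
  obtain ⟨s, t, hst⟩ := exists_eqOn_affine_of_isPreconnected hI h
  have hfa : f a = s * a + t := hst.closure hf (by fun_prop) ha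
  exact ⟨s, fun y hy ↦ by rw [hst hy, hfa]; ring⟩

lemma Finset.eventually_notMem_nhdsNE {X : Type*} [TopologicalSpace X] [T1Space X]
    (B : Finset X) (a : X) : ∀ᶠ y in 𝓝[≠] a, y ∉ B := by
  have hB : ((B : Set X) \ {a})ᶜ ∈ 𝓝 a :=
    B.finite_toSet.sdiff.isClosed.isOpen_compl.mem_nhds (by simp)
  filter_upwards [mem_nhdsWithin_of_mem_nhds hB, self_mem_nhdsWithin] with y hyB hya
  exact fun hy ↦ hyB ⟨hy, hya⟩

lemma StrictMono.perm_inv {α : Type*} [LinearOrder α] {g : Equiv.Perm α} (hg : StrictMono g) :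
    StrictMono ⇑g⁻¹ :=
  fun x y hxy ↦ hg.lt_iff_lt.1 (by simpa using hxy)

namespace IsPL0

variable {f : Equiv.Perm ℝ}

lemma continuous (hf : IsPL0 f) : Continuous f :=
  hf.1.monotone.continuous_of_surjective f.surjective

lemma exists_eventually_affine_nhdsGT (hf : IsPL0 f) (a : ℝ) :
    ∃ τ : ℝ, ∀ᶠ x in 𝓝[>] a, f x = f a + τ * (x - a) := by
  obtain ⟨B, hB⟩ := hf.2.2.2
  obtain ⟨u, hau : a < u, hu⟩ := mem_nhdsGT_iff_exists_Ioo_subset.1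
    (nhdsGT_le_nhdsNE a (B.eventually_notMem_nhdsNE a))
  obtain ⟨τ, hτ⟩ := exists_eqOn_affine_through_of_isPreconnected hf.continuous isPreconnected_Ioo
    (a := a) (by simp [closure_Ioo hau.ne, hau.le]) fun y hy ↦ hB y (hu hy)
  exact ⟨τ, eventually_of_mem (Ioo_mem_nhdsGT hau) hτ⟩

lemma exists_eventually_affine_nhdsLT (hf : IsPL0 f) (a : ℝ) :
    ∃ τ : ℝ, ∀ᶠ x in 𝓝[<] a, f x = f a + τ * (x - a) := by
  obtain ⟨B, hB⟩ := hf.2.2.2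
  obtain ⟨l, hla : l < a, hl⟩ := mem_nhdsLT_iff_exists_Ioo_subset.1
    (nhdsLT_le_nhdsNE a (B.eventually_notMem_nhdsNE a))
  obtain ⟨τ, hτ⟩ := exists_eqOn_affine_through_of_isPreconnected hf.continuous isPreconnected_Ioo
    (a := a) (by simp [closure_Ioo hla.ne, hla.le]) fun y hy ↦ hB y (hl hy)
  exact ⟨τ, eventually_of_mem (Ioo_mem_nhdsLT hla) hτ⟩

end IsPL0

lemma Equiv.Perm.tendsto_nhdsGT_of_strictMono {g : Equiv.Perm ℝ} (hg : StrictMono g) (x : ℝ) :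
    Tendsto g (𝓝[>] x) (𝓝[>] g x) :=
  (hg.monotone.continuous_of_surjective g.surjective).continuousWithinAt.tendsto_nhdsWithin
    fun _ hy ↦ hg hy

lemma Equiv.Perm.tendsto_nhdsLT_of_strictMono {g : Equiv.Perm ℝ} (hg : StrictMono g) (x : ℝ) :
    Tendsto g (𝓝[<] x) (𝓝[<] g x) :=
  (hg.monotone.continuous_of_surjective g.surjective).continuousWithinAt.tendsto_nhdsWithin
    fun _ hy ↦ hg hy

lemma derivWithin_eq_of_eventually_affine {f : ℝ → ℝ} {s : Set ℝ} {a τ : ℝ}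
    (hs : UniqueDiffWithinAt ℝ s a) (h : ∀ᶠ x in 𝓝[s] a, f x = f a + τ * (x - a)) :
    derivWithin f s a = τ := by
  have hdiff : HasDerivAt (fun x ↦ f a + τ * (x - a)) τ a := by
    simpa using ((hasDerivAt_id a).sub_const a).const_mul τ |>.const_add (f a)
  rw [Filter.EventuallyEq.derivWithin_eq h (by simp), hdiff.hasDerivWithinAt.derivWithin hs]

/-- With `x = g y`, `x - g a = σ (y - a)` and `g (f y) - g a = σ (f y - a) = σ τ (y - a)`:
the slope `σ` of `g` cancels. -/
lemma eventually_conj_affine {l l' : Filter ℝ} {f g : Equiv.Perm ℝ} {a σ τ : ℝ} (hfa : f a = a)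
    (hf : ∀ᶠ y in l, f y = f a + τ * (y - a)) (hg : ∀ᶠ y in l, g y = g a + σ * (y - a))
    (hfl : Tendsto f l l) (hgl : Tendsto ⇑g⁻¹ l' l) :
    ∀ᶠ x in l', (g * f * g⁻¹) x = (g * f * g⁻¹) (g a) + τ * (x - g a) := by
  filter_upwards [hgl.eventually hf, hgl.eventually hg, hgl.eventually (hfl.eventually hg)]
    with x hfx hgx hgfx
  simp only [Equiv.Perm.mul_apply, Equiv.Perm.coe_inv, Equiv.symm_apply_apply,
    Equiv.apply_symm_apply, hfa] at hfx hgx hgfx ⊢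
  linear_combination hgfx + σ * hfx - τ * hgx

/-- If `(a,b)` is an orbital of `f`, then the conjugate `f^g = g⁻¹fg` (right-action
convention; the element `g * f * g⁻¹` in Mathlib's left-action convention) has the
same leading slope at `g a` (derivative from the right) and the same trailing slope
at `g b` (derivative from the left) as `f` has at `a` and `b` respectively. -/
theorem conj_leading_trailing_slopes (f g : Equiv.Perm ℝ)
    (hf : IsPL0 f) (hg : IsPL0 g) (a b : ℝ) (horb : IsOrbital f a b) :
    derivWithin (⇑(g * f * g⁻¹)) (Set.Ioi (g a)) (g a) = derivWithin (⇑f) (Set.Ioi a) a ∧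
    derivWithin (⇑(g * f * g⁻¹)) (Set.Iio (g b)) (g b) = derivWithin (⇑f) (Set.Iio b) b := by
  obtain ⟨-, -, hfa, hfb⟩ := horb
  constructor
  · obtain ⟨τ, hτ⟩ := hf.exists_eventually_affine_nhdsGT a
    obtain ⟨σ, hσ⟩ := hg.exists_eventually_affine_nhdsGT a
    have hfl := hfa ▸ Equiv.Perm.tendsto_nhdsGT_of_strictMono hf.1 a
    have hgl : Tendsto ⇑g⁻¹ (𝓝[>] (g a)) (𝓝[>] a) := by
      simpa using Equiv.Perm.tendsto_nhdsGT_of_strictMono hg.1.perm_inv (g a)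
    rw [derivWithin_eq_of_eventually_affine (uniqueDiffWithinAt_Ioi a) hτ,
      derivWithin_eq_of_eventually_affine (uniqueDiffWithinAt_Ioi _)
        (eventually_conj_affine hfa hτ hσ hfl hgl)]
  · obtain ⟨τ, hτ⟩ := hf.exists_eventually_affine_nhdsLT b
    obtain ⟨σ, hσ⟩ := hg.exists_eventually_affine_nhdsLT b
    have hfl := hfb ▸ Equiv.Perm.tendsto_nhdsLT_of_strictMono hf.1 b
    have hgl : Tendsto ⇑g⁻¹ (𝓝[<] (g b)) (𝓝[<] b) := by
      simpa using Equiv.Perm.tendsto_nhdsLT_of_strictMono hg.1.perm_inv (g b)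
    rw [derivWithin_eq_of_eventually_affine (uniqueDiffWithinAt_Iio b) hτ,
      derivWithin_eq_of_eventually_affine (uniqueDiffWithinAt_Iio _)
        (eventually_conj_affine hfb hτ hσ hfl hgl)]
end

section
/- Let f₀, f₁ ∈ PL₀(I) satisfy the relations [f₀f₁⁻¹, f₀⁻¹f₁f₀] = 1 and [f₀f₁⁻¹, f₀⁻²f₁f₀²] = 1. If the open interval A is an orbital of both f₀ and f₁, then f₀ and f₁ commute when restricted to A (i.e., f₀f₁ and f₁f₀ agree on A). -/
open scoped commutatorElement

/-- The two defining relations `[f₀f₁⁻¹, f₁^{f₀}] = 1` and `[f₀f₁⁻¹, f₁^{f₀²}] = 1`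
of Thompson's group `F`, for the pair `(f₀, f₁)`.  The paper composes in word order
(functions act on the right), so the paper's word `f₀f₁⁻¹` is the group element
`f₁⁻¹ * f₀` in Mathlib's left-action convention, and the conjugate
`f₁^{f₀} = f₀⁻¹f₁f₀` is the element `f₀ * f₁ * f₀⁻¹`.  Recall `⁅a,b⁆ = 1 ↔ a*b = b*a`. -/
def ThompsonRel (f₀ f₁ : Equiv.Perm ℝ) : Prop :=
  ⁅f₁⁻¹ * f₀, f₀ * f₁ * f₀⁻¹⁆ = 1 ∧ ⁅f₁⁻¹ * f₀, f₀ ^ 2 * f₁ * (f₀ ^ 2)⁻¹⁆ = 1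

/-!
Put `H = ⁅f₀⁻¹ f₁⁻¹ f₀, f₀⁻¹⁆`; it is the quotient of the conjugates of `f₁⁻¹ f₀` by `f₀` and by
`f₀²`, and the two relations say exactly that `f₁` commutes with both conjugates, hence with `H`.
To the right of the common fixed point `a`, every element of `PL₀(I)` is a homothety centred at
`a`; homotheties commute, so the commutator `H` is the identity on some interval `(a, c)`.
Every `f₁`-orbit in the orbital `(a, b)` accumulates at `a`, so it meets `(a, c)`, and `H`,
commuting with `f₁`, is the identity on all of `(a, b)`. Evaluating `H = 1` at `f₀⁻¹ x` gives
`f₀ f₁ x = f₁ f₀ x`.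
-/

open Filter Set Topology

lemma Equiv.Perm.strictMono_inv {α : Type*} [LinearOrder α] {f : Equiv.Perm α}
    (hf : StrictMono f) : StrictMono ⇑f⁻¹ :=
  fun x y hxy => hf.lt_iff_lt.1 (by simpa using hxy)

lemma Equiv.Perm.continuous_of_strictMono {f : Equiv.Perm ℝ} (hf : StrictMono f) :
    Continuous f :=
  hf.monotone.continuous_of_surjective f.surjective

def HasRightSlopeAt (f : Equiv.Perm ℝ) (a s : ℝ) : Prop :=
  0 < s ∧ ⇑f =ᶠ[𝓝[>] a] AffineMap.homothety a s

lemma tendsto_homothety_nhdsGT {a s : ℝ} (hs : 0 < s) :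
    Tendsto (AffineMap.homothety a s) (𝓝[>] a) (𝓝[>] a) := by
  have hcont : Tendsto (AffineMap.homothety a s) (𝓝 a) (𝓝 a) := by
    simpa using (AffineMap.homothety_continuous a s).tendsto a
  refine tendsto_nhdsWithin_iff.2 ⟨hcont.mono_left nhdsWithin_le_nhds, ?_⟩
  filter_upwards [self_mem_nhdsWithin] with x (hx : a < x)
  have := mul_pos hs (sub_pos.2 hx)
  simp only [AffineMap.homothety_apply, vsub_eq_sub, smul_eq_mul, vadd_eq_add, mem_Ioi]
  linarith

namespace HasRightSlopeAt

variable {f g : Equiv.Perm ℝ} {a p q : ℝ}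

lemma mul (hf : HasRightSlopeAt f a p) (hg : HasRightSlopeAt g a q) :
    HasRightSlopeAt (f * g) a (p * q) := by
  refine ⟨mul_pos hf.1 hg.1, ?_⟩
  filter_upwards [hg.2, (tendsto_homothety_nhdsGT hg.1).eventually hf.2] with x hgx hfx
  rw [Equiv.Perm.mul_apply, hgx, hfx, AffineMap.homothety_mul_apply]

lemma inv (hf : HasRightSlopeAt f a p) : HasRightSlopeAt f⁻¹ a p⁻¹ := by
  refine ⟨inv_pos.2 hf.1, ?_⟩
  filter_upwards [(tendsto_homothety_nhdsGT (inv_pos.2 hf.1)).eventually hf.2] with x hx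
  rw [Equiv.Perm.inv_eq_iff_eq, hx, ← AffineMap.homothety_mul_apply, mul_inv_cancel₀ hf.1.ne',
    AffineMap.homothety_one, AffineMap.id_apply]

lemma commutatorElement (hf : HasRightSlopeAt f a p) (hg : HasRightSlopeAt g a q) :
    HasRightSlopeAt ⁅f, g⁆ a 1 := by
  convert ((hf.mul hg).mul hf.inv).mul hg.inv using 1
  · exact commutatorElement_def f g
  · field_simp [hf.1.ne', hg.1.ne']

lemma eventually_apply_eq_self (h : HasRightSlopeAt f a 1) : ∀ᶠ x in 𝓝[>] a, f x = x :=
  h.2.mono fun x hx => by simp [hx, AffineMap.homothety_one]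

end HasRightSlopeAt

lemma exists_affine_eqOn_of_locally_affine {f : ℝ → ℝ} {U : Set ℝ} (hU : IsOpen U)
    (hU' : IsPreconnected U) (hf : ∀ x ∈ U, ∃ s t : ℝ, ∀ᶠ y in 𝓝 x, f y = s * y + t) :
    ∃ s t : ℝ, ∀ x ∈ U, f x = s * x + t := by
  have hloc : ∀ x ∈ U, HasDerivAt f (deriv f x) x ∧ HasDerivAt (deriv f) 0 x := by
    intro x hx
    obtain ⟨s, t, h⟩ := hf x hx
    have hderiv : ∀ᶠ y in 𝓝 x, HasDerivAt f s y := by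
      filter_upwards [eventually_eventually_nhds.2 h] with y hy
      simpa using (((hasDerivAt_id y).const_mul s).add_const t).congr_of_eventuallyEq hy
    have hconst : deriv f =ᶠ[𝓝 x] fun _ => s := hderiv.mono fun y hy => hy.deriv
    exact ⟨hconst.self_of_nhds ▸ hderiv.self_of_nhds,
      (hasDerivAt_const x s).congr_of_eventuallyEq hconst⟩
  obtain ⟨s, hs⟩ := hU.exists_is_const_of_deriv_eq_zero hU'
    (fun x hx => (hloc x hx).2.differentiableAt.differentiableWithinAt)
    (fun x hx => (hloc x hx).2.deriv)
  obtain ⟨t, ht⟩ := hU.exists_eq_add_of_deriv_eq hU' (g := fun x => s * x)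
    (fun x hx => (hloc x hx).1.differentiableAt.differentiableWithinAt)
    (by fun_prop) (fun x hx => by simp [hs x hx])
  exact ⟨s, t, ht⟩

lemma IsPL0.exists_hasRightSlopeAt {f : Equiv.Perm ℝ} (hf : IsPL0 f) {a : ℝ} (ha : f a = a) :
    ∃ s, HasRightSlopeAt f a s := by
  obtain ⟨hmono, -, -, B, hB⟩ := hf
  obtain ⟨u, hau, hBu⟩ : ∃ u ∈ Ioi a, Ioo a u ⊆ {x | x ∉ B} :=
    mem_nhdsGT_iff_exists_Ioo_subset.1 <| ((nhdsWithin_mono a fun x (hx : a < x) => hx.ne').trans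
      (nhdsNE_le_cofinite a)) B.eventually_cofinite_notMem
  obtain ⟨s, t, hst⟩ := exists_affine_eqOn_of_locally_affine isOpen_Ioo isPreconnected_Ioo
    fun x hx => hB x (hBu hx)
  have hst' : EqOn f (fun x => s * x + t) (Ico a u) :=
    EqOn.of_subset_closure hst (Equiv.Perm.continuous_of_strictMono hmono).continuousOn
      (by fun_prop) Ioo_subset_Ico_self (by rw [closure_Ioo hau.ne]; exact Ico_subset_Icc_self)
  have hta : t = a - s * a := by
    have := hst' (left_mem_Ico.2 hau)
    simp only [ha] at this
    linarith
  have hs : 0 < s := by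
    have hmid : (a + u) / 2 ∈ Ioo a u := ⟨by linarith [mem_Ioi.1 hau], by linarith [mem_Ioi.1 hau]⟩
    have := hmono hmid.1
    rw [ha, hst _ hmid, hta] at this
    nlinarith [hmid.1]
  refine ⟨s, hs, ?_⟩
  filter_upwards [Ioo_mem_nhdsGT hau] with x hx
  rw [hst _ hx, hta, AffineMap.homothety_apply]
  simp only [vsub_eq_sub, smul_eq_mul, vadd_eq_add]
  ring

lemma IsPreconnected.forall_apply_lt_or_forall_lt_apply {f : ℝ → ℝ} {s : Set ℝ}
    (hs : IsPreconnected s) (hf : ContinuousOn f s) (hne : ∀ x ∈ s, f x ≠ x) :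
    (∀ x ∈ s, f x < x) ∨ (∀ x ∈ s, x < f x) := by
  by_contra! h
  obtain ⟨⟨u, hu, hfu⟩, ⟨v, hv, hfv⟩⟩ := h
  obtain ⟨w, hw, hw0⟩ : (0 : ℝ) ∈ (fun x => f x - x) '' s :=
    hs.intermediate_value hv hu (f := fun x => f x - x) (hf.sub continuousOn_id)
      ⟨by linarith, by linarith⟩
  exact hne w hw (sub_eq_zero.1 hw0)

lemma tendsto_iterate_nhdsGT_of_apply_lt {g : ℝ → ℝ} {a b x : ℝ} (hg : Continuous g)
    (hmono : StrictMono g) (ha : g a = a) (hlt : ∀ y ∈ Ioo a b, g y < y) (hx : x ∈ Ioo a b) :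
    Tendsto (fun n => g^[n] x) atTop (𝓝[>] a) := by
  have hmem : ∀ n, g^[n] x ∈ Ioo a b := by
    intro n
    induction n with
    | zero => exact hx
    | succ n ih =>
      rw [Function.iterate_succ_apply']
      exact ⟨ha ▸ hmono ih.1, (hlt _ ih).trans ih.2⟩
  have hanti : Antitone fun n => g^[n] x := antitone_nat_of_succ_le fun n => by
    rw [Function.iterate_succ_apply']
    exact (hlt _ (hmem n)).le
  have hbdd : BddBelow (range fun n => g^[n] x) := ⟨a, forall_mem_range.2 fun n => (hmem n).1.le⟩
  have hlim := tendsto_atTop_ciInf hanti hbdd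
  have hL : ⨅ n, g^[n] x = a := by
    have hfix : g (⨅ n, g^[n] x) = ⨅ n, g^[n] x :=
      isFixedPt_of_tendsto_iterate hlim hg.continuousAt
    have haL : a ≤ ⨅ n, g^[n] x := le_ciInf fun n => (hmem n).1.le
    by_contra hne
    exact (hlt _ ⟨haL.lt_of_ne (Ne.symm hne), (ciInf_le hbdd 0).trans_lt hx.2⟩).ne hfix
  rw [hL] at hlim
  exact tendsto_nhdsWithin_iff.2 ⟨hlim, Eventually.of_forall fun n => (hmem n).1⟩

namespace Equiv.Perm

variable {f : Equiv.Perm ℝ} {a b : ℝ}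

lemma exists_zpow_apply_mem_Ioo (hf : StrictMono f) (ha : f a = a)
    (hne : ∀ y ∈ Ioo a b, f y ≠ y) {c x : ℝ} (hc : a < c) (hx : x ∈ Ioo a b) :
    ∃ n : ℤ, (f ^ n) x ∈ Ioo a c := by
  rcases isPreconnected_Ioo.forall_apply_lt_or_forall_lt_apply
    (continuous_of_strictMono hf).continuousOn hne with hlt | hgt
  · obtain ⟨n, hn⟩ := ((tendsto_iterate_nhdsGT_of_apply_lt (continuous_of_strictMono hf) hf ha
      hlt hx).eventually (Ioo_mem_nhdsGT hc)).exists
    exact ⟨n, by rwa [zpow_natCast, coe_pow]⟩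
  · have hf' := strictMono_inv hf
    have hlt' : ∀ y ∈ Ioo a b, f⁻¹ y < y := fun y hy => by simpa using hf' (hgt y hy)
    obtain ⟨n, hn⟩ := ((tendsto_iterate_nhdsGT_of_apply_lt (continuous_of_strictMono hf') hf'
      (inv_eq_iff_eq.2 ha.symm) hlt' hx).eventually (Ioo_mem_nhdsGT hc)).exists
    exact ⟨-n, by rwa [zpow_neg, zpow_natCast, ← inv_pow, coe_pow]⟩

lemma apply_eq_self_of_commute {H : Equiv.Perm ℝ} (hf : StrictMono f) (ha : f a = a)
    (hne : ∀ y ∈ Ioo a b, f y ≠ y) (hcomm : Commute H f) (hH : ∀ᶠ x in 𝓝[>] a, H x = x) :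
    ∀ x ∈ Ioo a b, H x = x := by
  obtain ⟨c, hc, hHc⟩ := mem_nhdsGT_iff_exists_Ioo_subset.1 hH
  intro x hx
  obtain ⟨n, hn⟩ := exists_zpow_apply_mem_Ioo hf ha hne hc hx
  refine (f ^ n).injective ?_
  rw [← mul_apply, ← (hcomm.zpow_right n).eq, mul_apply]
  exact hHc hn

end Equiv.Perm

lemma Commute.conj_inv_left {G : Type*} [Group G] {a b g : G} (h : Commute a (g * b * g⁻¹)) :
    Commute (g⁻¹ * a * g) b := by
  simpa only [inv_inv, ← mul_assoc, inv_mul_cancel, one_mul, inv_mul_cancel_right] using h.conj g⁻¹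

lemma commute_commutatorElement_of_commute_conj {G : Type*} [Group G] {x₀ x₁ : G}
    (h₁ : Commute (x₁⁻¹ * x₀) (x₀ * x₁ * x₀⁻¹))
    (h₂ : Commute (x₁⁻¹ * x₀) (x₀ ^ 2 * x₁ * (x₀ ^ 2)⁻¹)) :
    Commute ⁅x₀⁻¹ * x₁⁻¹ * x₀, x₀⁻¹⁆ x₁ := by
  have hquot : ⁅x₀⁻¹ * x₁⁻¹ * x₀, x₀⁻¹⁆ =
      (x₀⁻¹ * (x₁⁻¹ * x₀) * x₀) * ((x₀ ^ 2)⁻¹ * (x₁⁻¹ * x₀) * x₀ ^ 2)⁻¹ := by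
    simp [commutatorElement_def, pow_two, mul_assoc]
  rw [hquot]
  exact h₁.conj_inv_left.mul_left h₂.conj_inv_left.inv_left

/-- If `f₀, f₁ ∈ PL₀(I)` satisfy the two standard relations of Thompson's group `F`
and the open interval `A = (a,b)` is an orbital of both `f₀` and `f₁`, then `f₀` and
`f₁` commute on `A`. -/
theorem commute_on_common_orbital (f₀ f₁ : Equiv.Perm ℝ)
    (h₀ : IsPL0 f₀) (h₁ : IsPL0 f₁) (hrel : ThompsonRel f₀ f₁) (a b : ℝ)
    (horb₀ : IsOrbital f₀ a b) (horb₁ : IsOrbital f₁ a b) :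
    ∀ x ∈ Set.Ioo a b, f₀ (f₁ x) = f₁ (f₀ x) := by
  obtain ⟨-, -, ha₀, hb₀⟩ := horb₀
  obtain ⟨-, hne₁, ha₁, -⟩ := horb₁
  obtain ⟨p, hp⟩ := h₀.exists_hasRightSlopeAt ha₀
  obtain ⟨q, hq⟩ := h₁.exists_hasRightSlopeAt ha₁
  have hcomm : Commute ⁅f₀⁻¹ * f₁⁻¹ * f₀, f₀⁻¹⁆ f₁ :=
    commute_commutatorElement_of_commute_conj (commutatorElement_eq_one_iff_commute.1 hrel.1)
      (commutatorElement_eq_one_iff_commute.1 hrel.2)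
  have hgerm := (((hp.inv.mul hq.inv).mul hp).commutatorElement hp.inv).eventually_apply_eq_self
  have hid := Equiv.Perm.apply_eq_self_of_commute h₁.1 ha₁ hne₁ hcomm hgerm
  intro x hx
  have hx' : f₀⁻¹ x ∈ Ioo a b := by
    simpa only [Equiv.Perm.inv_eq_iff_eq.2 ha₀.symm, Equiv.Perm.inv_eq_iff_eq.2 hb₀.symm] using
      (Equiv.Perm.strictMono_inv h₀.1).mapsTo_Ioo hx
  have h := hid _ hx'
  simp only [commutatorElement_def, mul_inv_cancel_right, mul_inv_rev, inv_inv,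
    Equiv.Perm.coe_inv, Equiv.Perm.coe_mul, Function.comp_apply, Equiv.apply_symm_apply,
    EmbeddingLike.apply_eq_iff_eq] at h
  rw [Equiv.symm_apply_eq, Equiv.symm_apply_eq] at h
  exact h.symm
end

section
/- Let f₀, f₁ ∈ PL₀(I) satisfy the relations [f₀f₁⁻¹, f₀⁻¹f₁f₀] = 1 and [f₀f₁⁻¹, f₀⁻²f₁f₀²] = 1. Let (a,c) be an orbital of f₀ on which f₀(x) > x, which is not an orbital of f₁, and suppose f₁ has at least one orbital contained in (a,c). Let (b₁,d₁) be the smallest orbital of f₁ contained in (a,c). Then a < b₁, i.e., f₁ fixes a neighborhood of a within [a,c]. -/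
open scoped commutatorElement

/-!
Suppose `b₁ = a`. Then `d₁ < c`, and `A = f₁⁻¹ f₀` commutes with the conjugates
`B = f₀ f₁ f₀⁻¹` and `C = f₀² f₁ f₀⁻²`, whose orbitals starting at `a` are `(a, f₀ d₁)` and
`(a, f₀² d₁)`. Since `A` fixes `a` and permutes the orbitals of `B`, it fixes `f₀ d₁`; commuting
with `C`, it then fixes the whole `C`-orbit of `f₀ d₁`, which accumulates at `f₀² d₁`. Near
`f₀² d₁` from the left both `f₀` and `f₁` are affine, so they agree on a whole left neighbourhood,
i.e. `A` is the identity there. But the `C`-orbit of `d₁` accumulates at `f₀² d₁` too, and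
`A d₁ = f₁⁻¹ (f₀ d₁) ≠ d₁`.
-/

open Set Filter Topology Function

def IsPiecewiseAffine (f : ℝ → ℝ) : Prop :=
  ∃ B : Finset ℝ, ∀ x ∉ B, ∃ s t : ℝ, ∀ᶠ y in 𝓝 x, f y = s * y + t

lemma IsPL0.isPiecewiseAffine {f : Equiv.Perm ℝ} (hf : IsPL0 f) : IsPiecewiseAffine f :=
  hf.2.2.2

lemma affine_coeffs_eq_of_eq_of_eq {s t s' t' u v : ℝ} (huv : u ≠ v)
    (hu : s * u + t = s' * u + t') (hv : s * v + t = s' * v + t') : s = s' ∧ t = t' := by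
  have hs : s = s' := by
    have : (s - s') * (u - v) = 0 := by linear_combination hu - hv
    simpa [sub_eq_zero, huv] using this
  exact ⟨hs, by subst hs; linarith⟩

lemma IsPreconnected.exists_affine_eqOn {f : ℝ → ℝ} {S : Set ℝ} (hS : IsPreconnected S)
    (hne : S.Nonempty) (hf : ∀ x ∈ S, ∃ s t : ℝ, ∀ᶠ y in 𝓝 x, f y = s * y + t) :
    ∃ s t : ℝ, ∀ x ∈ S, f x = s * x + t := by
  -- the slope and intercept of the local affine piece, recovered via `deriv`, are locally constant
  let φ : ℝ → ℝ × ℝ := fun x => (deriv f x, f x - deriv f x * x)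
  have hφ : ∀ x ∈ S, ∀ᶠ y in 𝓝 x, φ y = φ x := by
    intro x hx
    obtain ⟨s, t, hst⟩ := hf x hx
    have hloc : ∀ᶠ y in 𝓝 x, φ y = (s, t) := by
      filter_upwards [hst.eventually_nhds] with y hy
      have hderiv : deriv f y = s := by
        rw [EventuallyEq.deriv_eq (f := fun z => s * z + t) hy]
        simp
      simp only [φ, hderiv, hy.self_of_nhds, add_sub_cancel_left]
    filter_upwards [hloc] with y hy
    rw [hy, hloc.self_of_nhds]
  obtain ⟨x₀, hx₀⟩ := hne
  refine ⟨(φ x₀).1, (φ x₀).2, fun x hx => ?_⟩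
  have hconst : φ x₀ = φ x :=
    hS.induction₂ (fun x y => φ x = φ y)
      (fun x hx => eventually_nhdsWithin_of_eventually_nhds ((hφ x hx).mono fun _ h => h.symm))
      (fun _ _ _ _ _ _ => Eq.trans) (fun _ _ _ _ => Eq.symm) hx₀ hx
  rw [hconst]
  simp only [φ]
  ring

namespace IsPiecewiseAffine

variable {f g : ℝ → ℝ}

lemma exists_eventually_eq_affine_nhdsLT (hf : IsPiecewiseAffine f) (q : ℝ) :
    ∃ s t : ℝ, ∀ᶠ x in 𝓝[<] q, f x = s * x + t := by
  obtain ⟨B, hB⟩ := hf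
  have hB' : ∀ᶠ x in 𝓝[<] q, x ∉ B :=
    ((nhdsLT_le_nhdsNE q).trans (nhdsNE_le_cofinite q)) B.eventually_cofinite_notMem
  obtain ⟨m, hm, hmB⟩ := mem_nhdsLT_iff_exists_Ioo_subset.mp hB'
  obtain ⟨s, t, hst⟩ :=
    isPreconnected_Ioo.exists_affine_eqOn (nonempty_Ioo.2 hm) fun x hx => hB x (hmB hx)
  exact ⟨s, t, eventually_of_mem (Ioo_mem_nhdsLT hm) hst⟩

lemma eventually_eq_nhdsLT_of_frequently_eq (hf : IsPiecewiseAffine f)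
    (hg : IsPiecewiseAffine g) {q : ℝ} (h : ∃ᶠ x in 𝓝[<] q, f x = g x) :
    ∀ᶠ x in 𝓝[<] q, f x = g x := by
  obtain ⟨s, t, hst⟩ := hf.exists_eventually_eq_affine_nhdsLT q
  obtain ⟨s', t', hst'⟩ := hg.exists_eventually_eq_affine_nhdsLT q
  have haff := hst.and hst'
  obtain ⟨u, hu, ⟨hfu, hgu⟩, huq⟩ :=
    (h.and_eventually (haff.and self_mem_nhdsWithin)).exists
  obtain ⟨v, hv, ⟨hfv, hgv⟩, hvu, -⟩ :=
    (h.and_eventually (haff.and (Ioo_mem_nhdsLT huq))).exists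
  obtain ⟨hs, ht⟩ := affine_coeffs_eq_of_eq_of_eq hvu.ne (hfu.symm.trans (hu.trans hgu))
    (hfv.symm.trans (hv.trans hgv))
  exact haff.mono fun x ⟨hfx, hgx⟩ => by rw [hfx, hgx, hs, ht]

end IsPiecewiseAffine

lemma tendsto_iterate_nhdsLT {α : Type*} [ConditionallyCompleteLinearOrder α]
    [TopologicalSpace α] [OrderTopology α] {g : α → α} (hg : StrictMono g) (hc : Continuous g)
    {z q : α} (hzq : z < q) (hq : g q = q) (hfix : ∀ x ∈ Ioo z q, g x ≠ x) (hz : z < g z) :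
    Tendsto (fun n => g^[n] z) atTop (𝓝[<] q) := by
  have hmono : Monotone fun n => g^[n] z := hg.monotone.monotone_iterate_of_le_map hz.le
  have hlt : ∀ n, g^[n] z < q := fun n => iterate_fixed hq n ▸ hg.iterate n hzq
  have hbdd : BddAbove (range fun n => g^[n] z) := ⟨q, forall_mem_range.2 fun n => (hlt n).le⟩
  have hL := tendsto_atTop_ciSup hmono hbdd
  have hLq : ⨆ n, g^[n] z = q := by
    by_contra hne
    refine hfix _ ⟨hz.trans_le (le_ciSup hbdd 1), ?_⟩
      (isFixedPt_of_tendsto_iterate hL hc.continuousAt)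
    exact (ciSup_le fun n => (hlt n).le).lt_of_ne hne
  exact tendsto_nhdsWithin_iff.2 ⟨hLq ▸ hL, Eventually.of_forall hlt⟩

section Perm

variable {α : Type*}

lemma StrictMono.perm_inv_s12 [LinearOrder α] {f : Equiv.Perm α} (hf : StrictMono f) :
    StrictMono ⇑f⁻¹ :=
  fun x y hxy => by rw [← hf.lt_iff_lt]; simpa using hxy

lemma StrictMono.perm_conj [LinearOrder α] {f g : Equiv.Perm α} (hf : StrictMono f)
    (hg : StrictMono g) : StrictMono ⇑(g * f * g⁻¹) :=
  (hg.comp hf).comp hg.perm_inv_s12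

lemma Equiv.Perm.inv_mul_apply_eq_self_iff {f g : Equiv.Perm α} (x : α) :
    (g⁻¹ * f) x = x ↔ f x = g x :=
  Equiv.Perm.inv_eq_iff_eq

lemma Commute.perm_apply_eq_self_iff {A g : Equiv.Perm α} (h : Commute A g) (x : α) :
    A (g x) = g x ↔ A x = x := by
  rw [← Equiv.Perm.mul_apply, h.eq, Equiv.Perm.mul_apply, g.apply_eq_iff_eq]

end Perm

namespace IsOrbital

variable {f : Equiv.Perm ℝ} {p q : ℝ}

lemma right_unique {q' : ℝ} (h : IsOrbital f p q) (h' : IsOrbital f p q') : q = q' := by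
  by_contra hne
  rcases lt_or_gt_of_ne hne with hlt | hlt
  · exact h'.2.1 ⟨h.1, hlt⟩ h.2.2.2
  · exact h.2.1 ⟨h'.1, hlt⟩ h'.2.2.2

lemma inv (h : IsOrbital f p q) : IsOrbital f⁻¹ p q :=
  ⟨h.1, fun _ hx hfx => h.2.1 hx (Equiv.Perm.inv_eq_iff_eq.1 hfx).symm,
    Equiv.Perm.inv_eq_iff_eq.2 h.2.2.1.symm, Equiv.Perm.inv_eq_iff_eq.2 h.2.2.2.symm⟩

lemma conj {g : Equiv.Perm ℝ} (hg : StrictMono g) (h : IsOrbital f p q) :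
    IsOrbital (g * f * g⁻¹) (g p) (g q) := by
  obtain ⟨hpq, hsupp, hp, hq⟩ := h
  refine ⟨hg hpq, fun x hx hfx => hsupp (a := g⁻¹ x) ⟨?_, ?_⟩ ?_, by simp [hp],
    by simp [hq]⟩
  · rw [← hg.lt_iff_lt]; simpa using hx.1
  · rw [← hg.lt_iff_lt]; simpa using hx.2
  · exact Equiv.Perm.eq_inv_iff_eq.2 hfx

lemma apply_right_eq_of_commute {A : Equiv.Perm ℝ} (hA : StrictMono A) (hAf : Commute A f)
    (h : IsOrbital f p q) (hp : A p = p) : A q = q := by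
  have h' := h.conj hA
  rw [hAf.mul_inv_cancel, hp] at h'
  exact (h.right_unique h').symm

lemma frequently_pow_apply_nhdsLT_of_lt (hf : StrictMono f) (h : IsOrbital f p q) {z : ℝ}
    (hz : z ∈ Ioo p q) (hfz : z < f z) : ∃ᶠ x in 𝓝[<] q, ∃ n : ℕ, (f ^ n) z = x := by
  have hlim := tendsto_iterate_nhdsLT hf (hf.monotone.continuous_of_surjective f.surjective) hz.2
    h.2.2.2 (fun x hx => h.2.1 ⟨hz.1.trans hx.1, hx.2⟩) hfz
  exact hlim.frequently (Frequently.of_forall fun n => ⟨n, by rw [Equiv.Perm.iterate_eq_pow]⟩)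

lemma frequently_zpow_apply_nhdsLT (hf : StrictMono f) (h : IsOrbital f p q) {z : ℝ}
    (hz : z ∈ Ioo p q) : ∃ᶠ x in 𝓝[<] q, ∃ n : ℤ, (f ^ n) z = x := by
  rcases lt_or_gt_of_ne (h.2.1 hz) with hfz | hfz
  · have hfz' : z < f⁻¹ z := by simpa using hf.perm_inv_s12 hfz
    refine (h.inv.frequently_pow_apply_nhdsLT_of_lt hf.perm_inv_s12 hz hfz').mono ?_
    rintro x ⟨n, rfl⟩
    exact ⟨-n, by simp [zpow_neg, inv_pow]⟩
  · refine (h.frequently_pow_apply_nhdsLT_of_lt hf hz hfz).mono ?_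
    rintro x ⟨n, rfl⟩
    exact ⟨n, by simp⟩

lemma inv_mul_apply_eq_self_of_commute {C f₀ f₁ : Equiv.Perm ℝ} (hC : StrictMono C)
    (h : IsOrbital C p q) (hf₀ : IsPiecewiseAffine f₀) (hf₁ : IsPiecewiseAffine f₁)
    (hcomm : Commute (f₁⁻¹ * f₀) C) {z w : ℝ} (hz : z ∈ Ioo p q) (hw : w ∈ Ioo p q)
    (hfix : (f₁⁻¹ * f₀) z = z) : (f₁⁻¹ * f₀) w = w := by
  -- both `C`-orbits accumulate at `q`, where `f₀` and `f₁` are affine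
  have hev : ∀ᶠ x in 𝓝[<] q, f₀ x = f₁ x :=
    hf₀.eventually_eq_nhdsLT_of_frequently_eq hf₁ <| (h.frequently_zpow_apply_nhdsLT hC hz).mono
      fun x ⟨n, hn⟩ => (Equiv.Perm.inv_mul_apply_eq_self_iff x).1
        (hn ▸ ((hcomm.zpow_right n).perm_apply_eq_self_iff z).2 hfix)
  obtain ⟨x, ⟨n, rfl⟩, hx⟩ :=
    ((h.frequently_zpow_apply_nhdsLT hC hw).and_eventually hev).exists
  exact ((hcomm.zpow_right n).perm_apply_eq_self_iff w).1
    ((Equiv.Perm.inv_mul_apply_eq_self_iff _).2 hx)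

end IsOrbital

theorem first_orbital_left_gap_general (f₀ f₁ : Equiv.Perm ℝ)
    (h₀ : IsPL0 f₀) (h₁ : IsPL0 f₁) (hrel : ThompsonRel f₀ f₁) (a c : ℝ)
    (horb₀ : IsOrbital f₀ a c) (hup : ∀ x ∈ Set.Ioo a c, x < f₀ x)
    (hne : ¬ IsOrbital f₁ a c) (b₁ d₁ : ℝ)
    (horb₁ : IsOrbital f₁ b₁ d₁) (hsub : Set.Ioo b₁ d₁ ⊆ Set.Ioo a c) :
    a < b₁ := by
  obtain ⟨hab, hdc⟩ := (Ioo_subset_Ioo_iff horb₁.1).1 hsub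
  refine hab.lt_of_ne fun hba => ?_
  subst hba
  have hd₁ : d₁ < f₀ d₁ :=
    hup d₁ ⟨horb₁.1, hdc.lt_of_ne fun h => hne (h ▸ horb₁)⟩
  have hf₀₂ : StrictMono ⇑(f₀ ^ 2) := Equiv.Perm.iterate_eq_pow f₀ 2 ▸ h₀.1.iterate 2
  have hf₀d₁ : f₀ d₁ < (f₀ ^ 2) d₁ := by simpa [sq] using h₀.1 hd₁
  have horbB : IsOrbital (f₀ * f₁ * f₀⁻¹) a (f₀ d₁) := by
    simpa only [horb₀.2.2.1] using horb₁.conj h₀.1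
  have horbC : IsOrbital (f₀ ^ 2 * f₁ * (f₀ ^ 2)⁻¹) a ((f₀ ^ 2) d₁) := by
    simpa only [sq, Equiv.Perm.mul_apply, horb₀.2.2.1] using horb₁.conj hf₀₂
  have hfix : (f₁⁻¹ * f₀) (f₀ d₁) = f₀ d₁ :=
    horbB.apply_right_eq_of_commute (h₁.1.perm_inv_s12.comp h₀.1)
      (commutatorElement_eq_one_iff_commute.1 hrel.1)
      ((Equiv.Perm.inv_mul_apply_eq_self_iff a).2 (horb₀.2.2.1.trans horb₁.2.2.1.symm))
  have hfix' := horbC.inv_mul_apply_eq_self_of_commute (h₁.1.perm_conj hf₀₂)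
    h₀.isPiecewiseAffine h₁.isPiecewiseAffine (commutatorElement_eq_one_iff_commute.1 hrel.2)
    ⟨horb₁.1.trans hd₁, hf₀d₁⟩ ⟨horb₁.1, hd₁.trans hf₀d₁⟩ hfix
  rw [Equiv.Perm.inv_mul_apply_eq_self_iff, horb₁.2.2.2] at hfix'
  exact hd₁.ne' hfix'

/-- Suppose `f₀, f₁ ∈ PL₀(I)` satisfy the two standard relations of Thompson's group
`F`, `(a,c)` is an orbital of `f₀` on which `f₀ x > x` (an up-bump), `(a,c)` is not
an orbital of `f₁`, and `(b₁,d₁)` is the smallest orbital of `f₁` contained in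
`(a,c)`.  Then `a < b₁`: the function `f₁` fixes a neighborhood of `a` within
`[a,c]`. -/
theorem first_orbital_left_gap (f₀ f₁ : Equiv.Perm ℝ)
    (h₀ : IsPL0 f₀) (h₁ : IsPL0 f₁) (hrel : ThompsonRel f₀ f₁) (a c : ℝ)
    (horb₀ : IsOrbital f₀ a c) (hup : ∀ x ∈ Set.Ioo a c, x < f₀ x)
    (hne : ¬ IsOrbital f₁ a c) (b₁ d₁ : ℝ)
    (horb₁ : IsOrbital f₁ b₁ d₁) (hsub : Set.Ioo b₁ d₁ ⊆ Set.Ioo a c)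
    (hmin : ∀ b d : ℝ, IsOrbital f₁ b d → Set.Ioo b d ⊆ Set.Ioo a c → b₁ ≤ b) :
    a < b₁ :=
  first_orbital_left_gap_general f₀ f₁ h₀ h₁ hrel a c horb₀ hup hne b₁ d₁ horb₁ hsub
end
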